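/- For every rational number u, setting a = u² + 9/4, p = u·(u⁴ + (9/4)·u² + 1), q = u⁴ + (9/4)·u² + 3/2, r = u·(u⁴ + (9/4)·u² + 3/2), s = u² + 1, one has (p + q)⁴ + a·(r − s)⁴ = (p − q)⁴ + a·(r + s)⁴. -/

import Mathlib

theorem add_pow_four_sub_sub_pow_four {R : Type*} [CommRing R] (x y : R) :
    (x + y) ^ 4 - (x - y) ^ 4 = 8 * x * y * (x ^ 2 + y ^ 2) := by
  ring

theorem add_pow_four_add_mul_sub_pow_four_eq {R : Type*} [CommRing R] {a p q r s : R}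
    (h : p * q * (p ^ 2 + q ^ 2) = a * (r * s * (r ^ 2 + s ^ 2))) :
    (p + q) ^ 4 + a * (r - s) ^ 4 = (p - q) ^ 4 + a * (r + s) ^ 4 := by
  have hpq := add_pow_four_sub_sub_pow_four p q
  have hrs := add_pow_four_sub_sub_pow_four r s
  linear_combination hpq - a * hrs + 8 * h

theorem stmt_15 (u : ℚ) (a p q r s : ℚ)
    (ha : a = u ^ 2 + 9 / 4)
    (hp : p = u * (u ^ 4 + (9 / 4) * u ^ 2 + 1))
    (hq : q = u ^ 4 + (9 / 4) * u ^ 2 + 3 / 2)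
    (hr : r = u * (u ^ 4 + (9 / 4) * u ^ 2 + 3 / 2))
    (hs : s = u ^ 2 + 1) :
    (p + q) ^ 4 + a * (r - s) ^ 4 = (p - q) ^ 4 + a * (r + s) ^ 4 := by
  apply add_pow_four_add_mul_sub_pow_four_eq
  subst ha hp hq hr hs
  ring
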